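/- arXiv:1909.07909 — 4 statements merged into one kernel-verified Lean document; each statement's English description precedes it below -/
import Mathlib

section
/- For matrices U1 ∈ C^{n×r1}, V1 ∈ C^{m×s1}, B1 ∈ C^{r1×s1}, U2 ∈ C^{n×r2}, V2 ∈ C^{m×s2}, B2 ∈ C^{r2×s2}, the Hadamard (entrywise) product satisfies (U1 B1 V1*) ∘ (U2 B2 V2*) = (U1 ⊙ᵀ U2)(B1 ⊗ B2)(V1 ⊙ᵀ V2)*, where ⊙ᵀ denotes the transpose Khatri-Rao product (row-wise Kronecker product) and ⊗ the Kronecker product. -/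
open Matrix
open scoped Kronecker

/-- Transpose Khatri-Rao product: the `i`-th row is the Kronecker product of the
`i`-th rows of `C` and `D`. -/
def khatriRaoT {n q m : Type*} (C : Matrix n q ℂ) (D : Matrix n m ℂ) :
    Matrix n (q × m) ℂ :=
  fun i p => C i p.1 * D i p.2

theorem hadamard_of_low_rank_factors
    {n m r1 s1 r2 s2 : ℕ}
    (U1 : Matrix (Fin n) (Fin r1) ℂ) (B1 : Matrix (Fin r1) (Fin s1) ℂ)
    (V1 : Matrix (Fin m) (Fin s1) ℂ)
    (U2 : Matrix (Fin n) (Fin r2) ℂ) (B2 : Matrix (Fin r2) (Fin s2) ℂ)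
    (V2 : Matrix (Fin m) (Fin s2) ℂ) :
    (U1 * B1 * V1ᴴ).hadamard (U2 * B2 * V2ᴴ)
      = khatriRaoT U1 U2 * (B1 ⊗ₖ B2) * (khatriRaoT V1 V2)ᴴ := by
  ext i j
  simp only [hadamard_apply, mul_apply, conjTranspose_apply, khatriRaoT,
    kroneckerMap_apply, Fintype.sum_prod_type, Finset.sum_mul, Finset.mul_sum,
    star_mul']
  conv_lhs => rw [Finset.sum_comm]
  conv_lhs => enter [2, a]; rw [Finset.sum_comm]
  conv_lhs => rw [Finset.sum_comm]
  conv_lhs => enter [2, a]; rw [Finset.sum_comm]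
  conv_lhs => enter [2, a, 2, b]; rw [Finset.sum_comm]
  refine Finset.sum_congr rfl fun a _ => Finset.sum_congr rfl fun b _ =>
    Finset.sum_congr rfl fun c _ => Finset.sum_congr rfl fun d _ => ?_
  ring
end

section
/- For block matrices: ([A1 0; 0 A2] R) ⊙ᵀ ([B1 0; 0 B2] S) = [A1 ⊙ᵀ B1, 0; 0, A2 ⊙ᵀ B2] (R ⊗ S), where A1, B1 have the same number of rows, A2, B2 have the same number of rows, and R, S are conformable. -/
open Matrix
open scoped Kronecker

theorem khatriRaoT_blockDiag_mul
    {n1 n2 q1 q1' q2 q2' r r' : ℕ}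
    (A1 : Matrix (Fin n1) (Fin q1) ℂ) (B1 : Matrix (Fin n1) (Fin q1') ℂ)
    (A2 : Matrix (Fin n2) (Fin q2) ℂ) (B2 : Matrix (Fin n2) (Fin q2') ℂ)
    (R : Matrix (Fin q1 ⊕ Fin q2) (Fin r) ℂ)
    (S : Matrix (Fin q1' ⊕ Fin q2') (Fin r') ℂ) :
    khatriRaoT (fromBlocks A1 0 0 A2 * R) (fromBlocks B1 0 0 B2 * S)
      = fromBlocks (khatriRaoT A1 B1) 0 0 (khatriRaoT A2 B2) *
          (R ⊗ₖ S).submatrix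
            (Sum.elim (fun p : Fin q1 × Fin q1' => (Sum.inl p.1, Sum.inl p.2))
                      (fun p : Fin q2 × Fin q2' => (Sum.inr p.1, Sum.inr p.2)))
            id := by
  ext i p
  cases i with
  | inl a =>
      simp [khatriRaoT, mul_apply, fromBlocks, Fintype.sum_sum_type,
        Fintype.sum_prod_type, Finset.sum_mul_sum, kroneckerMap_apply]
      ring_nf
      refine Finset.sum_congr rfl fun j _ => Finset.sum_congr rfl fun k _ => ?_
      ring
  | inr a =>
      simp [khatriRaoT, mul_apply, fromBlocks, Fintype.sum_sum_type,
        Fintype.sum_prod_type, Finset.sum_mul_sum, kroneckerMap_apply]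
      ring_nf
      refine Finset.sum_congr rfl fun j _ => Finset.sum_congr rfl fun k _ => ?_
      ring
end

section
/- If A ∈ C^{n×n} is invertible and every HSS block row A(I, I^c) with I an interval of consecutive indices has rank at most k, then every HSS block row of A⁻¹ also has rank at most k (the HSS rank is preserved under inversion). -/
open Matrix

/-- The HSS block row of `A` for the interval `I = [a, b)` of row indices:
columns range over the complement of `I`. -/
def blockRow {n : ℕ} (A : Matrix (Fin n) (Fin n) ℂ) (a b : ℕ) :
    Matrix {i : Fin n // a ≤ (i : ℕ) ∧ (i : ℕ) < b}
           {j : Fin n // (j : ℕ) < a ∨ b ≤ (j : ℕ)} ℂ :=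
  fun i j => A i.1 j.1

section aux

variable {n : ℕ} (a b : ℕ)

/-- Extension-by-zero from the complement of the interval. -/
noncomputable def extZero :
    ({j : Fin n // (j : ℕ) < a ∨ b ≤ (j : ℕ)} → ℂ) →ₗ[ℂ] (Fin n → ℂ) where
  toFun x := fun j => if h : (j : ℕ) < a ∨ b ≤ (j : ℕ) then x ⟨j, h⟩ else 0
  map_add' x y := by
    funext j
    by_cases h : (j : ℕ) < a ∨ b ≤ (j : ℕ) <;> simp [h]
  map_smul' c x := by
    funext j
    by_cases h : (j : ℕ) < a ∨ b ≤ (j : ℕ) <;> simp [h]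

lemma rank_blockRow_inv_le {A : Matrix (Fin n) (Fin n) ℂ} (hA : IsUnit A) :
    (blockRow A⁻¹ a b).rank ≤ (blockRow A a b).rank := by
  classical
  have hdet : IsUnit A.det := (Matrix.isUnit_iff_isUnit_det A).mp hA
  have hinv : A⁻¹ * A = 1 := Matrix.nonsing_inv_mul A hdet
  have hinv' : A * A⁻¹ = 1 := Matrix.mul_nonsing_inv A hdet
  set Q := blockRow A a b with hQ
  set Q' := blockRow A⁻¹ a b with hQ'
  -- the restriction map
  let res : (Fin n → ℂ) →ₗ[ℂ] ({j : Fin n // (j : ℕ) < a ∨ b ≤ (j : ℕ)} → ℂ) :=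
    LinearMap.funLeft ℂ ℂ Subtype.val
  let g := res ∘ₗ A.mulVecLin ∘ₗ extZero a b
  -- Key: w := A *ᵥ extZero x vanishes on the interval when x ∈ ker Q
  have hw : ∀ x ∈ LinearMap.ker Q.mulVecLin,
      ∀ i : Fin n, ¬ ((i : ℕ) < a ∨ b ≤ (i : ℕ)) →
      A.mulVec (extZero a b x) i = 0 := by
    intro x hx i hi
    have hx' := congrFun (LinearMap.mem_ker.mp hx) ⟨i, by omega⟩
    simp only [mulVecLin_apply, mulVec, dotProduct, Pi.zero_apply] at hx' ⊢
    rw [← Fintype.sum_subtype_add_sum_subtype (fun j : Fin n => (j : ℕ) < a ∨ b ≤ (j : ℕ))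
      (fun j => A i j * (extZero a b x) j)]
    have h1 : (∑ j : {j : Fin n // (j : ℕ) < a ∨ b ≤ (j : ℕ)},
        A i j * (extZero a b x) j) = 0 := by
      rw [← hx']
      apply Finset.sum_congr rfl
      intro j _
      simp [extZero, j.2, hQ, blockRow]
    have h2 : (∑ j : {j : Fin n // ¬ ((j : ℕ) < a ∨ b ≤ (j : ℕ))},
        A i j * (extZero a b x) j) = 0 := by
      apply Finset.sum_eq_zero
      intro j _
      simp [extZero, j.2]
    rw [h1, h2, add_zero]
  have hmaps : ∀ x ∈ LinearMap.ker Q.mulVecLin, g x ∈ LinearMap.ker Q'.mulVecLin := by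
    intro x hx
    rw [LinearMap.mem_ker]
    funext i
    set w := A.mulVec (extZero a b x) with hwdef
    have hvw : A⁻¹.mulVec w = extZero a b x := by
      rw [hwdef, Matrix.mulVec_mulVec, hinv, Matrix.one_mulVec]
    have hvi : (extZero a b x) i.1 = 0 := by
      simp [extZero, show ¬((i.1 : ℕ) < a ∨ b ≤ (i.1 : ℕ)) by omega]
    have := congrFun hvw i.1
    simp only [mulVec, dotProduct] at this
    rw [← Fintype.sum_subtype_add_sum_subtype (fun j : Fin n => (j : ℕ) < a ∨ b ≤ (j : ℕ))
      (fun j => A⁻¹ i.1 j * w j)] at this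
    have h2 : (∑ j : {j : Fin n // ¬ ((j : ℕ) < a ∨ b ≤ (j : ℕ))},
        A⁻¹ i.1 j * w j) = 0 := by
      apply Finset.sum_eq_zero
      intro j _
      have hz := hw x hx j.1 j.2
      rw [← hwdef] at hz
      rw [hz, mul_zero]
    rw [h2, add_zero, hvi] at this
    simpa [g, res, hQ', blockRow, mulVec, dotProduct, LinearMap.funLeft, hwdef] using this
  have hinj : Function.Injective
      ((g.restrict hmaps : LinearMap.ker Q.mulVecLin →ₗ[ℂ] LinearMap.ker Q'.mulVecLin)) := by
    rw [← LinearMap.ker_eq_bot, LinearMap.ker_eq_bot']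
    rintro ⟨x, hx⟩ hgx
    have hgx' : g x = 0 := by
      have := congrArg Subtype.val hgx
      simpa [LinearMap.restrict_apply] using this
    -- w vanishes everywhere
    set w := A.mulVec (extZero a b x) with hwdef
    have hw0 : w = 0 := by
      funext j
      by_cases h : (j : ℕ) < a ∨ b ≤ (j : ℕ)
      · have := congrFun hgx' ⟨j, h⟩
        simpa [g, res, LinearMap.funLeft] using this
      · exact hw x hx j h
    have hv0 : extZero a b x = 0 := by
      have : A⁻¹.mulVec w = extZero a b x := by
        rw [hwdef, Matrix.mulVec_mulVec, hinv, Matrix.one_mulVec]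
      rw [hw0, Matrix.mulVec_zero] at this
      exact this.symm
    have hx0 : x = 0 := by
      funext j
      have := congrFun hv0 j.1
      simpa [extZero, j.2] using this
    exact Subtype.ext hx0
  -- rank-nullity
  have hk : Module.finrank ℂ (LinearMap.ker Q.mulVecLin) ≤
      Module.finrank ℂ (LinearMap.ker Q'.mulVecLin) :=
    LinearMap.finrank_le_finrank_of_injective hinj
  have e1 := LinearMap.finrank_range_add_finrank_ker Q.mulVecLin
  have e2 := LinearMap.finrank_range_add_finrank_ker Q'.mulVecLin
  rw [Matrix.rank, Matrix.rank]
  omega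

end aux

theorem hss_rank_inverse {n : ℕ} (A : Matrix (Fin n) (Fin n) ℂ) (k : ℕ)
    (hA : IsUnit A)
    (hrow : ∀ a b : ℕ, (blockRow A a b).rank ≤ k) :
    ∀ a b : ℕ, (blockRow A⁻¹ a b).rank ≤ k := by
  intro a b
  exact le_trans (rank_blockRow_inv_le a b hA) (hrow a b)
end

section
/- Let A be an n×n matrix, and suppose that for every off-diagonal block B occurring in a HODLR partition of depth p, the block is replaced by an approximation B̃ with ‖B − B̃‖₂ ≤ ε‖B‖₂. Then the resulting approximation à satisfies ‖A − Ã‖₂ ≤ 2pε‖A‖₂ (an O(ε log n) bound when the cluster tree is balanced). -/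
open Matrix
open scoped Matrix.Norms.L2Operator

set_option linter.unusedSectionVars false

section Helpers

lemma l2_opNorm_le_bound' {m k : Type*} [Fintype m] [Fintype k] [DecidableEq k]
    (M : Matrix m k ℂ) {K : ℝ} (hK : 0 ≤ K)
    (h : ∀ x : EuclideanSpace ℂ k, ‖(EuclideanSpace.equiv m ℂ).symm (M *ᵥ x)‖ ≤ K * ‖x‖) :
    ‖M‖ ≤ K := by
  rw [Matrix.l2_opNorm_def]
  exact ContinuousLinearMap.opNorm_le_bound _ hK (fun x => h x)

lemma l2_opNorm_one_le {m : Type*} [Fintype m] [DecidableEq m] :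
    ‖(1 : Matrix m m ℂ)‖ ≤ 1 := by
  apply l2_opNorm_le_bound' _ zero_le_one
  intro x
  simp only [Matrix.one_mulVec, one_mul]
  exact le_of_eq rfl

lemma l2_opNorm_submatrix {m' k' m k : Type*} [Fintype m'] [Fintype k'] [DecidableEq m']
    [DecidableEq k'] [Fintype m] [Fintype k] [DecidableEq m]
    [DecidableEq k] (A : Matrix m' k' ℂ) (f : m → m') (g : k → k')
    (hf : Function.Injective f) (hg : Function.Injective g) :
    ‖A.submatrix f g‖ ≤ ‖A‖ := by
  set P : Matrix m m' ℂ := Matrix.of fun i a => if a = f i then 1 else 0 with hP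
  set Q : Matrix k' k ℂ := Matrix.of fun a j => if a = g j then 1 else 0 with hQ
  have hfactor : A.submatrix f g = P * A * Q := by
    ext i j
    simp [Matrix.mul_apply, hP, hQ, Finset.sum_ite_eq, Finset.sum_ite_eq']
  have hQn : ‖Q‖ ≤ 1 := by
    have h1 : Qᴴ * Q = 1 := by
      ext j j'
      simp only [Matrix.mul_apply, Matrix.conjTranspose_apply, hQ, Matrix.of_apply,
        Matrix.one_apply]
      by_cases hjj : j = j'
      · subst hjj; simp [apply_ite]
      · have : g j ≠ g j' := fun hc => hjj (hg hc)
        rw [Finset.sum_eq_zero]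
        · simp [hjj]
        · intro a _
          by_cases h1 : a = g j <;> by_cases h2 : a = g j' <;>
            simp_all [apply_ite]
    have h2 : ‖Q‖ * ‖Q‖ ≤ 1 := by
      rw [← Matrix.l2_opNorm_conjTranspose_mul_self, h1]
      exact l2_opNorm_one_le
    nlinarith [norm_nonneg Q]
  have hPn : ‖P‖ ≤ 1 := by
    have h1 : P * Pᴴ = 1 := by
      ext i i'
      simp only [Matrix.mul_apply, Matrix.conjTranspose_apply, hP, Matrix.of_apply,
        Matrix.one_apply]
      by_cases hii : i = i'
      · subst hii; simp [apply_ite]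
      · have : f i ≠ f i' := fun hc => hii (hf hc)
        rw [Finset.sum_eq_zero]
        · simp [hii]
        · intro a _
          by_cases h1 : a = f i <;> by_cases h2 : a = f i' <;>
            simp_all [apply_ite]
    have h2 : ‖P‖ * ‖P‖ ≤ 1 := by
      have h3 := Matrix.l2_opNorm_conjTranspose_mul_self Pᴴ
      rw [Matrix.conjTranspose_conjTranspose, Matrix.l2_opNorm_conjTranspose] at h3
      rw [← h3, h1]
      exact l2_opNorm_one_le
    nlinarith [norm_nonneg P]
  calc ‖A.submatrix f g‖ = ‖P * A * Q‖ := by rw [hfactor]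
    _ ≤ ‖P * A‖ * ‖Q‖ := Matrix.l2_opNorm_mul _ _
    _ ≤ (‖P‖ * ‖A‖) * ‖Q‖ :=
        mul_le_mul_of_nonneg_right (Matrix.l2_opNorm_mul P A) (norm_nonneg Q)
    _ ≤ (1 * ‖A‖) * 1 :=
        mul_le_mul (mul_le_mul hPn le_rfl (norm_nonneg A) zero_le_one) hQn
          (norm_nonneg Q) (by positivity)
    _ = ‖A‖ := by ring

lemma blockdiag_l2_norm_le {n : ℕ} (M : Matrix (Fin n) (Fin n) ℂ)
    (f g : Fin n → ℕ) (σ : ℕ → ℕ) (hσ : Function.Injective σ) {K : ℝ} (hK : 0 ≤ K)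
    (hsupp : ∀ i j, M i j ≠ 0 → g j = σ (f i))
    (hb : ∀ s, ‖(Matrix.of fun (i : {i : Fin n // f i = s}) (j : {j : Fin n // g j = σ s}) =>
      M i.1 j.1)‖ ≤ K) :
    ‖M‖ ≤ K := by
  apply l2_opNorm_le_bound' M hK
  intro x
  have hxnn : (0:ℝ) ≤ ∑ j, ‖x j‖ ^ 2 := Finset.sum_nonneg fun j _ => sq_nonneg _
  have hxsq : ‖x‖ ^ 2 = ∑ j, ‖x j‖ ^ 2 := by
    rw [EuclideanSpace.norm_eq, Real.sq_sqrt hxnn]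
  have hnorm : ‖(EuclideanSpace.equiv (Fin n) ℂ).symm (M *ᵥ x)‖
      = Real.sqrt (∑ i, ‖(M *ᵥ x) i‖ ^ 2) := by
    rw [EuclideanSpace.norm_eq]
    rfl
  rw [hnorm]
  have key : (∑ i, ‖(M *ᵥ x) i‖ ^ 2) ≤ K ^ 2 * ‖x‖ ^ 2 := by
    set T : Finset ℕ := Finset.image f Finset.univ with hT
    have hfib : (∑ i, ‖(M *ᵥ x) i‖ ^ 2)
        = ∑ s ∈ T, ∑ i ∈ Finset.univ.filter (fun i => f i = s), ‖(M *ᵥ x) i‖ ^ 2 := by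
      rw [Finset.sum_fiberwise_of_maps_to (fun i _ => Finset.mem_image_of_mem f
        (Finset.mem_univ i))]
    rw [hfib, hxsq]
    have hinner : ∀ s ∈ T,
        (∑ i ∈ Finset.univ.filter (fun i => f i = s), ‖(M *ᵥ x) i‖ ^ 2)
          ≤ K ^ 2 * ∑ j ∈ Finset.univ.filter (fun j => g j = σ s), ‖x j‖ ^ 2 := by
      intro s _
      set Ms : Matrix {i : Fin n // f i = s} {j : Fin n // g j = σ s} ℂ :=
        Matrix.of fun i j => M i.1 j.1 with hMs
      set xs : EuclideanSpace ℂ {j : Fin n // g j = σ s} := WithLp.toLp 2 (fun j => x j.1) with hxs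
      have hkey : ∀ (i : Fin n) (hi : f i = s), (M *ᵥ x) i = (Ms *ᵥ xs) ⟨i, hi⟩ := by
        intro i hi
        show (∑ j, M i j * x j) = ∑ j : {j : Fin n // g j = σ s}, M i j.1 * x j.1
        rw [← Finset.sum_subtype (Finset.univ.filter (fun j => g j = σ s))
          (fun j => by simp) (fun j => M i j * x j)]
        rw [Finset.sum_filter_of_ne]
        intro j _ hne
        have : M i j ≠ 0 := fun h0 => hne (by simp [h0])
        rw [hsupp i j this, hi]
      have h1a : (∑ i ∈ Finset.univ.filter (fun i => f i = s), ‖(M *ᵥ x) i‖ ^ 2)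
          = ∑ i : {i : Fin n // f i = s}, ‖(M *ᵥ x) i.1‖ ^ 2 :=
        Finset.sum_subtype _ (fun i => by simp) _
      have h1 : (∑ i ∈ Finset.univ.filter (fun i => f i = s), ‖(M *ᵥ x) i‖ ^ 2)
          = ∑ i : {i : Fin n // f i = s}, ‖(Ms *ᵥ xs) i‖ ^ 2 :=
        h1a.trans (Finset.sum_congr rfl (fun i _ => by rw [hkey i.1 i.2]))
      have h2 : (∑ i : {i : Fin n // f i = s}, ‖(Ms *ᵥ xs) i‖ ^ 2)
          = ‖(EuclideanSpace.equiv {i : Fin n // f i = s} ℂ).symm (Ms *ᵥ xs)‖ ^ 2 := by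
        rw [EuclideanSpace.norm_eq, Real.sq_sqrt (Finset.sum_nonneg fun i _ => sq_nonneg _)]
        rfl
      have h3 : ‖(EuclideanSpace.equiv {i : Fin n // f i = s} ℂ).symm (Ms *ᵥ xs)‖ ≤ K * ‖xs‖ :=
        le_trans (Matrix.l2_opNorm_mulVec Ms xs)
          (mul_le_mul_of_nonneg_right (hb s) (norm_nonneg xs))
      have h4 : ‖xs‖ ^ 2 = ∑ j ∈ Finset.univ.filter (fun j => g j = σ s), ‖x j‖ ^ 2 := by
        rw [EuclideanSpace.norm_eq, Real.sq_sqrt (Finset.sum_nonneg fun i _ => sq_nonneg _)]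
        exact (Finset.sum_subtype _ (fun j => by simp) (fun j => ‖x j‖ ^ 2)).symm
      rw [h1, h2, ← h4]
      nlinarith [h3, norm_nonneg ((EuclideanSpace.equiv {i : Fin n // f i = s} ℂ).symm (Ms *ᵥ xs)),
        norm_nonneg xs, mul_nonneg hK (norm_nonneg xs)]
    calc (∑ s ∈ T, ∑ i ∈ Finset.univ.filter (fun i => f i = s), ‖(M *ᵥ x) i‖ ^ 2)
        ≤ ∑ s ∈ T, K ^ 2 * ∑ j ∈ Finset.univ.filter (fun j => g j = σ s), ‖x j‖ ^ 2 :=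
          Finset.sum_le_sum hinner
      _ = K ^ 2 * ∑ s ∈ T, ∑ j ∈ Finset.univ.filter (fun j => g j = σ s), ‖x j‖ ^ 2 := by
          rw [Finset.mul_sum]
      _ ≤ K ^ 2 * ∑ j, ‖x j‖ ^ 2 := by
          apply mul_le_mul_of_nonneg_left _ (sq_nonneg K)
          rw [← Finset.sum_biUnion]
          · exact Finset.sum_le_sum_of_subset_of_nonneg (Finset.subset_univ _)
              (fun j _ _ => sq_nonneg _)
          · intro s _ t _ hst
            simp only [Function.onFun]
            rw [Finset.disjoint_left]
            intro j hj1 hj2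
            simp only [Finset.mem_filter] at hj1 hj2
            exact hst (hσ (hj1.2.symm.trans hj2.2))
  calc Real.sqrt (∑ i, ‖(M *ᵥ x) i‖ ^ 2) ≤ Real.sqrt (K ^ 2 * ‖x‖ ^ 2) :=
        Real.sqrt_le_sqrt key
    _ = K * ‖x‖ := by
        rw [← mul_pow, Real.sqrt_sq (mul_nonneg hK (norm_nonneg x))]

end Helpers

section BIdx
variable (c : ℕ → ℕ → ℕ) {n : ℕ}

/-- Index of the level-`ℓ` block containing position `i`. -/
def bIdx (ℓ i : ℕ) : ℕ := Nat.findGreatest (fun t => c ℓ t ≤ i) (2 ^ ℓ)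

variable (hc0 : ∀ ℓ, c ℓ 0 = 0) (hcn : ∀ ℓ, c ℓ (2 ^ ℓ) = n)
  (hmono : ∀ ℓ, Monotone (c ℓ)) (hnest : ∀ ℓ i, c (ℓ + 1) (2 * i) = c ℓ i)

include hc0 hcn hmono hnest

lemma bIdx_le (ℓ i : ℕ) : c ℓ (bIdx c ℓ i) ≤ i :=
  Nat.findGreatest_spec (P := fun t => c ℓ t ≤ i) (m := 0) (Nat.zero_le _)
    (show c ℓ 0 ≤ i by rw [hc0]; exact Nat.zero_le i)

lemma bIdx_lt_pow (ℓ : ℕ) {i : ℕ} (hi : i < n) : bIdx c ℓ i < 2 ^ ℓ := by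
  have h1 : bIdx c ℓ i ≤ 2 ^ ℓ := Nat.findGreatest_le _
  rcases lt_or_eq_of_le h1 with h | h
  · exact h
  · exfalso
    have h2 := bIdx_le c hc0 hcn hmono hnest ℓ i
    rw [h, hcn] at h2
    omega

lemma bIdx_lt (ℓ : ℕ) {i : ℕ} (hi : i < n) : i < c ℓ (bIdx c ℓ i + 1) := by
  have h1 : bIdx c ℓ i < 2 ^ ℓ := bIdx_lt_pow c hc0 hcn hmono hnest ℓ hi
  have h2 := Nat.findGreatest_is_greatest (P := fun t => c ℓ t ≤ i) (n := 2 ^ ℓ)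
    (k := bIdx c ℓ i + 1) (Nat.lt_succ_self _) (by omega)
  simp only [not_le] at h2
  exact h2

lemma bIdx_unique (ℓ : ℕ) {i t : ℕ} (hi : i < n) (h1 : c ℓ t ≤ i) (h2 : i < c ℓ (t + 1)) :
    bIdx c ℓ i = t := by
  have hb1 := bIdx_le c hc0 hcn hmono hnest ℓ i
  have hb2 := bIdx_lt c hc0 hcn hmono hnest ℓ hi
  by_contra hne
  rcases Nat.lt_or_ge (bIdx c ℓ i) t with h | h
  · have := hmono ℓ (show bIdx c ℓ i + 1 ≤ t by omega)
    omega
  · have := hmono ℓ (show t + 1 ≤ bIdx c ℓ i by omega)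
    omega

lemma bIdx_succ_cases (ℓ : ℕ) {i : ℕ} (hi : i < n) :
    bIdx c (ℓ + 1) i = 2 * bIdx c ℓ i ∨ bIdx c (ℓ + 1) i = 2 * bIdx c ℓ i + 1 := by
  have h1 := bIdx_le c hc0 hcn hmono hnest ℓ i
  have h2 := bIdx_lt c hc0 hcn hmono hnest ℓ hi
  have h1' := bIdx_le c hc0 hcn hmono hnest (ℓ + 1) i
  have h2' := bIdx_lt c hc0 hcn hmono hnest (ℓ + 1) hi
  have e1 : c (ℓ + 1) (2 * bIdx c ℓ i) = c ℓ (bIdx c ℓ i) := hnest ℓ _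
  have e2 : c (ℓ + 1) (2 * (bIdx c ℓ i + 1)) = c ℓ (bIdx c ℓ i + 1) := hnest ℓ _
  have hlt : bIdx c (ℓ + 1) i < 2 * bIdx c ℓ i + 2 := by
    by_contra h
    have := hmono (ℓ + 1) (show 2 * (bIdx c ℓ i + 1) ≤ bIdx c (ℓ + 1) i by omega)
    omega
  have hge : 2 * bIdx c ℓ i ≤ bIdx c (ℓ + 1) i := by
    by_contra h
    have := hmono (ℓ + 1) (show bIdx c (ℓ + 1) i + 1 ≤ 2 * bIdx c ℓ i by omega)
    omega
  omega

lemma bIdx_down (ℓ : ℕ) {i : ℕ} (hi : i < n) : bIdx c ℓ i = bIdx c (ℓ + 1) i / 2 := by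
  rcases bIdx_succ_cases c hc0 hcn hmono hnest ℓ hi with h | h <;> omega

lemma bIdx_eq_of_le {ℓ' ℓ : ℕ} (h : ℓ' ≤ ℓ) {i j : ℕ} (hi : i < n) (hj : j < n)
    (hb : bIdx c ℓ i = bIdx c ℓ j) : bIdx c ℓ' i = bIdx c ℓ' j := by
  induction ℓ with
  | zero =>
    have : ℓ' = 0 := by omega
    subst this; exact hb
  | succ ℓ ih =>
    rcases Nat.eq_or_lt_of_le h with rfl | h'
    · exact hb
    · have heq : bIdx c ℓ i = bIdx c ℓ j := by
        rw [bIdx_down c hc0 hcn hmono hnest ℓ hi, bIdx_down c hc0 hcn hmono hnest ℓ hj, hb]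
      exact ih (by omega) heq

lemma bIdx_zero {i : ℕ} (hi : i < n) : bIdx c 0 i = 0 := by
  apply bIdx_unique c hc0 hcn hmono hnest 0 hi
  · rw [hc0]; omega
  · have : c 0 (0 + 1) = n := by
      have := hcn 0
      simpa using this
    omega

end BIdx

/-- The submatrix of `A` with rows in the interval `[r1, r2)` and columns in the
interval `[c1, c2)`. -/
def intervalBlock {n : ℕ} (A : Matrix (Fin n) (Fin n) ℂ) (r1 r2 c1 c2 : ℕ) :
    Matrix {i : Fin n // r1 ≤ (i : ℕ) ∧ (i : ℕ) < r2}
           {j : Fin n // c1 ≤ (j : ℕ) ∧ (j : ℕ) < c2} ℂ :=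
  fun i j => A i.1 j.1

/-- If each off-diagonal block of a depth-`p` HODLR partition (given by the nested
boundary function `c`) is approximated with relative accuracy `ε` in the spectral
norm, and the diagonal blocks on the deepest level are kept exactly, then the
overall spectral norm error is at most `2 p ε ‖A‖`. -/
theorem hodlr_blockwise_approximation_error
    {n : ℕ} (p : ℕ) (ε : ℝ) (hε : 0 ≤ ε)
    (A At : Matrix (Fin n) (Fin n) ℂ)
    (c : ℕ → ℕ → ℕ)
    (hc0 : ∀ ℓ, c ℓ 0 = 0)
    (hcn : ∀ ℓ, c ℓ (2 ^ ℓ) = n)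
    (hmono : ∀ ℓ, Monotone (c ℓ))
    (hnest : ∀ ℓ i, c (ℓ + 1) (2 * i) = c ℓ i)
    (hdiag : ∀ i j : Fin n,
      (∃ t, t < 2 ^ p ∧ c p t ≤ (i : ℕ) ∧ (i : ℕ) < c p (t + 1) ∧
        c p t ≤ (j : ℕ) ∧ (j : ℕ) < c p (t + 1)) → At i j = A i j)
    (hblk : ∀ ℓ s, ℓ < p → s < 2 ^ ℓ →
      ‖intervalBlock (A - At) (c (ℓ + 1) (2 * s)) (c (ℓ + 1) (2 * s + 1))
          (c (ℓ + 1) (2 * s + 1)) (c (ℓ + 1) (2 * s + 2))‖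
        ≤ ε * ‖intervalBlock A (c (ℓ + 1) (2 * s)) (c (ℓ + 1) (2 * s + 1))
          (c (ℓ + 1) (2 * s + 1)) (c (ℓ + 1) (2 * s + 2))‖ ∧
      ‖intervalBlock (A - At) (c (ℓ + 1) (2 * s + 1)) (c (ℓ + 1) (2 * s + 2))
          (c (ℓ + 1) (2 * s)) (c (ℓ + 1) (2 * s + 1))‖
        ≤ ε * ‖intervalBlock A (c (ℓ + 1) (2 * s + 1)) (c (ℓ + 1) (2 * s + 2))
          (c (ℓ + 1) (2 * s)) (c (ℓ + 1) (2 * s + 1))‖) :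
    ‖A - At‖ ≤ 2 * p * ε * ‖A‖ := by
  classical
  set E : Matrix (Fin n) (Fin n) ℂ := A - At with hE
  have hble : ∀ ℓ (i : Fin n), c ℓ (bIdx c ℓ (i : ℕ)) ≤ (i : ℕ) :=
    fun ℓ i => bIdx_le c hc0 hcn hmono hnest ℓ i
  have hblt : ∀ ℓ (i : Fin n), (i : ℕ) < c ℓ (bIdx c ℓ (i : ℕ) + 1) :=
    fun ℓ i => bIdx_lt c hc0 hcn hmono hnest ℓ i.isLt
  have hbpow : ∀ ℓ (i : Fin n), bIdx c ℓ (i : ℕ) < 2 ^ ℓ :=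
    fun ℓ i => bIdx_lt_pow c hc0 hcn hmono hnest ℓ i.isLt
  have hbdown : ∀ ℓ (i : Fin n), bIdx c ℓ (i : ℕ) = bIdx c (ℓ + 1) (i : ℕ) / 2 :=
    fun ℓ i => bIdx_down c hc0 hcn hmono hnest ℓ i.isLt
  set U : ℕ → Matrix (Fin n) (Fin n) ℂ := fun ℓ => Matrix.of fun i j =>
    if bIdx c ℓ (i : ℕ) = bIdx c ℓ (j : ℕ) ∧
        bIdx c (ℓ + 1) (i : ℕ) = 2 * bIdx c ℓ (i : ℕ) ∧
        bIdx c (ℓ + 1) (j : ℕ) = 2 * bIdx c ℓ (j : ℕ) + 1 then E i j else 0 with hU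
  set L : ℕ → Matrix (Fin n) (Fin n) ℂ := fun ℓ => Matrix.of fun i j =>
    if bIdx c ℓ (j : ℕ) = bIdx c ℓ (i : ℕ) ∧
        bIdx c (ℓ + 1) (j : ℕ) = 2 * bIdx c ℓ (j : ℕ) ∧
        bIdx c (ℓ + 1) (i : ℕ) = 2 * bIdx c ℓ (i : ℕ) + 1 then E i j else 0 with hL
  -- Decomposition of the error into levels
  have hdecomp : E = ∑ ℓ ∈ Finset.range p, (U ℓ + L ℓ) := by
    ext i j
    rw [Matrix.sum_apply]
    simp only [Matrix.add_apply]
    by_cases hpd : bIdx c p (i : ℕ) = bIdx c p (j : ℕ)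
    · have hEz : E i j = 0 := by
        have hat : At i j = A i j := hdiag i j ⟨bIdx c p (i : ℕ), hbpow p i, hble p i, hblt p i,
          by rw [hpd]; exact hble p j, by rw [hpd]; exact hblt p j⟩
        simp [hE, Matrix.sub_apply, hat]
      rw [hEz, Finset.sum_eq_zero]
      intro ℓ hℓ
      rw [Finset.mem_range] at hℓ
      have hsame : bIdx c (ℓ + 1) (i : ℕ) = bIdx c (ℓ + 1) (j : ℕ) :=
        bIdx_eq_of_le c hc0 hcn hmono hnest (show ℓ + 1 ≤ p by omega) i.isLt j.isLt hpd
      have hU0 : U ℓ i j = 0 := by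
        simp only [hU, Matrix.of_apply]
        rw [if_neg]
        rintro ⟨h1, h2, h3⟩
        omega
      have hL0 : L ℓ i j = 0 := by
        simp only [hL, Matrix.of_apply]
        rw [if_neg]
        rintro ⟨h1, h2, h3⟩
        omega
      rw [hU0, hL0, add_zero]
    · have hex : ∃ ℓ, bIdx c ℓ (i : ℕ) ≠ bIdx c ℓ (j : ℕ) := ⟨p, hpd⟩
      have hPm : bIdx c (Nat.find hex) (i : ℕ) ≠ bIdx c (Nat.find hex) (j : ℕ) :=
        Nat.find_spec hex
      have hmle : Nat.find hex ≤ p := Nat.find_min' hex hpd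
      have hm0 : Nat.find hex ≠ 0 := by
        intro h
        apply hPm
        rw [h, bIdx_zero c hc0 hcn hmono hnest i.isLt, bIdx_zero c hc0 hcn hmono hnest j.isLt]
      set ℓ₀ := Nat.find hex - 1 with hℓ₀
      have hℓ₀p : ℓ₀ < p := by omega
      have hsucc : ℓ₀ + 1 = Nat.find hex := by omega
      have heq : bIdx c ℓ₀ (i : ℕ) = bIdx c ℓ₀ (j : ℕ) := by
        by_contra hne
        have := Nat.find_min' hex hne
        omega
      have hne1 : bIdx c (ℓ₀ + 1) (i : ℕ) ≠ bIdx c (ℓ₀ + 1) (j : ℕ) := by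
        rw [hsucc]; exact hPm
      -- only level ℓ₀ contributes
      have honlyU : ∀ ℓ, ℓ ≠ ℓ₀ → U ℓ i j = 0 := by
        intro ℓ hℓ
        simp only [hU, Matrix.of_apply]
        rw [if_neg]
        rintro ⟨h1, h2, h3⟩
        have hlt : ℓ < Nat.find hex := by
          by_contra hge
          exact hPm (bIdx_eq_of_le c hc0 hcn hmono hnest (show Nat.find hex ≤ ℓ by omega)
            i.isLt j.isLt h1)
        have hne' : bIdx c (ℓ + 1) (i : ℕ) ≠ bIdx c (ℓ + 1) (j : ℕ) := by omega
        have := Nat.find_min' hex hne'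
        omega
      have honlyL : ∀ ℓ, ℓ ≠ ℓ₀ → L ℓ i j = 0 := by
        intro ℓ hℓ
        simp only [hL, Matrix.of_apply]
        rw [if_neg]
        rintro ⟨h1, h2, h3⟩
        have hlt : ℓ < Nat.find hex := by
          by_contra hge
          exact hPm (bIdx_eq_of_le c hc0 hcn hmono hnest (show Nat.find hex ≤ ℓ by omega)
            i.isLt j.isLt h1.symm)
        have hne' : bIdx c (ℓ + 1) (i : ℕ) ≠ bIdx c (ℓ + 1) (j : ℕ) := by omega
        have := Nat.find_min' hex hne'
        omega
      rw [Finset.sum_eq_single ℓ₀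
        (fun ℓ _ hne => by rw [honlyU ℓ hne, honlyL ℓ hne, add_zero])
        (fun h => absurd (Finset.mem_range.mpr hℓ₀p) h)]
      have hci := bIdx_succ_cases c hc0 hcn hmono hnest ℓ₀ i.isLt
      have hcj := bIdx_succ_cases c hc0 hcn hmono hnest ℓ₀ j.isLt
      rcases hci with h2 | h2 <;> rcases hcj with h3 | h3
      · exact absurd (by omega : bIdx c (ℓ₀ + 1) (i : ℕ) = bIdx c (ℓ₀ + 1) (j : ℕ)) hne1
      · -- U contributes
        simp only [hU, hL, Matrix.of_apply]
        rw [if_pos ⟨heq, h2, h3⟩, if_neg (by rintro ⟨g1, g2, g3⟩; omega), add_zero]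
      · -- L contributes
        simp only [hU, hL, Matrix.of_apply]
        have hUneg : ¬(bIdx c ℓ₀ (i : ℕ) = bIdx c ℓ₀ (j : ℕ) ∧
            bIdx c (ℓ₀ + 1) (i : ℕ) = 2 * bIdx c ℓ₀ (i : ℕ) ∧
            bIdx c (ℓ₀ + 1) (j : ℕ) = 2 * bIdx c ℓ₀ (j : ℕ) + 1) := by
          rintro ⟨g1, g2, g3⟩; omega
        rw [if_neg hUneg, if_pos ⟨heq.symm, h3, h2⟩, zero_add]
      · exact absurd (by omega : bIdx c (ℓ₀ + 1) (i : ℕ) = bIdx c (ℓ₀ + 1) (j : ℕ)) hne1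
  -- Bound on the upper blocks at each level
  have hKnn : (0:ℝ) ≤ ε * ‖A‖ := mul_nonneg hε (norm_nonneg A)
  have hiAle : ∀ r1 r2 c1 c2, ‖intervalBlock A r1 r2 c1 c2‖ ≤ ‖A‖ := by
    intro r1 r2 c1 c2
    exact l2_opNorm_submatrix A Subtype.val Subtype.val Subtype.val_injective
      Subtype.val_injective
  have hUb : ∀ ℓ, ℓ < p → ‖U ℓ‖ ≤ ε * ‖A‖ := by
    intro ℓ hℓ
    apply blockdiag_l2_norm_le (U ℓ) (fun i => bIdx c (ℓ + 1) (i : ℕ))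
      (fun j => bIdx c (ℓ + 1) (j : ℕ)) (fun s => s + 1) (fun a b h => Nat.succ_injective h) hKnn
    · intro i j hne
      simp only [hU, Matrix.of_apply] at hne
      by_cases hcnd : bIdx c ℓ (i : ℕ) = bIdx c ℓ (j : ℕ) ∧
          bIdx c (ℓ + 1) (i : ℕ) = 2 * bIdx c ℓ (i : ℕ) ∧
          bIdx c (ℓ + 1) (j : ℕ) = 2 * bIdx c ℓ (j : ℕ) + 1
      · obtain ⟨h1, h2, h3⟩ := hcnd
        omega
      · rw [if_neg hcnd] at hne
        exact absurd rfl hne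
    · intro s
      rcases Nat.even_or_odd s with ⟨t, ht2⟩ | ⟨t, ht2⟩
      · -- s = 2 t
        by_cases ht : t < 2 ^ ℓ
        · have hmeq : (Matrix.of fun (i : {i : Fin n // bIdx c (ℓ + 1) (i : ℕ) = s})
              (j : {j : Fin n // bIdx c (ℓ + 1) (j : ℕ) = s + 1}) => U ℓ i.1 j.1)
              = (intervalBlock E (c (ℓ + 1) (2 * t)) (c (ℓ + 1) (2 * t + 1))
                  (c (ℓ + 1) (2 * t + 1)) (c (ℓ + 1) (2 * t + 2))).submatrix
                (fun i => ⟨i.1, by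
                  have hi2 : bIdx c (ℓ + 1) (i.1 : ℕ) = 2 * t := by omega
                  exact ⟨hi2 ▸ hble (ℓ + 1) i.1, by
                    have := hblt (ℓ + 1) i.1; rw [hi2] at this; exact this⟩⟩)
                (fun j => ⟨j.1, by
                  have hj2 : bIdx c (ℓ + 1) (j.1 : ℕ) = 2 * t + 1 := by omega
                  exact ⟨hj2 ▸ hble (ℓ + 1) j.1, by
                    have := hblt (ℓ + 1) j.1; rw [hj2] at this
                    exact lt_of_lt_of_le this (le_of_eq (by norm_num))⟩⟩) := by
            ext i j
            have hi2 : bIdx c (ℓ + 1) (i.1 : ℕ) = 2 * t := by have := i.2; omega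
            have hj2 : bIdx c (ℓ + 1) (j.1 : ℕ) = 2 * t + 1 := by have := j.2; omega
            have hbi : bIdx c ℓ (i.1 : ℕ) = t := by rw [hbdown ℓ i.1, hi2]; omega
            have hbj : bIdx c ℓ (j.1 : ℕ) = t := by rw [hbdown ℓ j.1, hj2]; omega
            show U ℓ i.1 j.1 = E i.1 j.1
            simp only [hU, Matrix.of_apply]
            rw [if_pos ⟨by rw [hbi, hbj], by rw [hi2, hbi], by rw [hj2, hbj]⟩]
          rw [hmeq]
          refine le_trans (l2_opNorm_submatrix _ _ _
              (fun a b h => Subtype.ext (Subtype.mk_eq_mk.mp h))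
              (fun a b h => Subtype.ext (Subtype.mk_eq_mk.mp h)))
            (le_trans (hblk ℓ t hℓ ht).1
              (mul_le_mul_of_nonneg_left (hiAle _ _ _ _) hε))
        · have hzero : (Matrix.of fun (i : {i : Fin n // bIdx c (ℓ + 1) (i : ℕ) = s})
              (j : {j : Fin n // bIdx c (ℓ + 1) (j : ℕ) = s + 1}) => U ℓ i.1 j.1) = 0 := by
            ext i j
            exfalso
            have h1 := hbpow (ℓ + 1) i.1
            have h2 := i.2
            have hp2 : (2:ℕ) ^ (ℓ + 1) = 2 * 2 ^ ℓ := by ring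
            omega
          rw [hzero, norm_zero]
          exact hKnn
      · -- s = 2 t + 1 : all entries vanish
        have hzero : (Matrix.of fun (i : {i : Fin n // bIdx c (ℓ + 1) (i : ℕ) = s})
            (j : {j : Fin n // bIdx c (ℓ + 1) (j : ℕ) = s + 1}) => U ℓ i.1 j.1) = 0 := by
          ext i j
          have h2 := i.2
          show U ℓ i.1 j.1 = 0
          simp only [hU, Matrix.of_apply]
          rw [if_neg]
          rintro ⟨g1, g2, g3⟩
          omega
        rw [hzero, norm_zero]
        exact hKnn
  -- Bound on the lower blocks at each level
  have hLb : ∀ ℓ, ℓ < p → ‖L ℓ‖ ≤ ε * ‖A‖ := by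
    intro ℓ hℓ
    apply blockdiag_l2_norm_le (L ℓ) (fun i => bIdx c (ℓ + 1) (i : ℕ))
      (fun j => bIdx c (ℓ + 1) (j : ℕ) + 1) (fun s => s) Function.injective_id hKnn
    · intro i j hne
      simp only [hL, Matrix.of_apply] at hne
      by_cases hcnd : bIdx c ℓ (j : ℕ) = bIdx c ℓ (i : ℕ) ∧
          bIdx c (ℓ + 1) (j : ℕ) = 2 * bIdx c ℓ (j : ℕ) ∧
          bIdx c (ℓ + 1) (i : ℕ) = 2 * bIdx c ℓ (i : ℕ) + 1
      · obtain ⟨h1, h2, h3⟩ := hcnd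
        omega
      · rw [if_neg hcnd] at hne
        exact absurd rfl hne
    · intro s
      rcases Nat.even_or_odd s with ⟨t, ht2⟩ | ⟨t, ht2⟩
      · -- s = 2 t : rows would need an odd child index, so the block is zero
        have hzero : (Matrix.of fun (i : {i : Fin n // bIdx c (ℓ + 1) (i : ℕ) = s})
            (j : {j : Fin n // bIdx c (ℓ + 1) (j : ℕ) + 1 = s}) => L ℓ i.1 j.1) = 0 := by
          ext i j
          have h2 := i.2
          show L ℓ i.1 j.1 = 0
          simp only [hL, Matrix.of_apply]
          rw [if_neg]
          rintro ⟨g1, g2, g3⟩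
          omega
        rw [hzero, norm_zero]
        exact hKnn
      · -- s = 2 t + 1
        by_cases ht : t < 2 ^ ℓ
        · have hmeq : (Matrix.of fun (i : {i : Fin n // bIdx c (ℓ + 1) (i : ℕ) = s})
              (j : {j : Fin n // bIdx c (ℓ + 1) (j : ℕ) + 1 = s}) => L ℓ i.1 j.1)
              = (intervalBlock E (c (ℓ + 1) (2 * t + 1)) (c (ℓ + 1) (2 * t + 2))
                  (c (ℓ + 1) (2 * t)) (c (ℓ + 1) (2 * t + 1))).submatrix
                (fun i => ⟨i.1, by
                  have hi2 : bIdx c (ℓ + 1) (i.1 : ℕ) = 2 * t + 1 := by omega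
                  exact ⟨hi2 ▸ hble (ℓ + 1) i.1, by
                    have := hblt (ℓ + 1) i.1; rw [hi2] at this
                    exact lt_of_lt_of_le this (le_of_eq (by norm_num))⟩⟩)
                (fun j => ⟨j.1, by
                  have hj2 : bIdx c (ℓ + 1) (j.1 : ℕ) = 2 * t := by omega
                  exact ⟨hj2 ▸ hble (ℓ + 1) j.1, by
                    have := hblt (ℓ + 1) j.1; rw [hj2] at this; exact this⟩⟩) := by
            ext i j
            have hi2 : bIdx c (ℓ + 1) (i.1 : ℕ) = 2 * t + 1 := by have := i.2; omega
            have hj2 : bIdx c (ℓ + 1) (j.1 : ℕ) = 2 * t := by have := j.2; omega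
            have hbi : bIdx c ℓ (i.1 : ℕ) = t := by rw [hbdown ℓ i.1, hi2]; omega
            have hbj : bIdx c ℓ (j.1 : ℕ) = t := by rw [hbdown ℓ j.1, hj2]; omega
            show L ℓ i.1 j.1 = E i.1 j.1
            simp only [hL, Matrix.of_apply]
            rw [if_pos ⟨by rw [hbi, hbj], by rw [hj2, hbj], by rw [hi2, hbi]⟩]
          rw [hmeq]
          refine le_trans (l2_opNorm_submatrix _ _ _
              (fun a b h => Subtype.ext (Subtype.mk_eq_mk.mp h))
              (fun a b h => Subtype.ext (Subtype.mk_eq_mk.mp h)))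
            (le_trans (hblk ℓ t hℓ ht).2
              (mul_le_mul_of_nonneg_left (hiAle _ _ _ _) hε))
        · have hzero : (Matrix.of fun (i : {i : Fin n // bIdx c (ℓ + 1) (i : ℕ) = s})
              (j : {j : Fin n // bIdx c (ℓ + 1) (j : ℕ) + 1 = s}) => L ℓ i.1 j.1) = 0 := by
            ext i j
            exfalso
            have h1 := hbpow (ℓ + 1) i.1
            have h2 := i.2
            have hp2 : (2:ℕ) ^ (ℓ + 1) = 2 * 2 ^ ℓ := by ring
            omega
          rw [hzero, norm_zero]
          exact hKnn
  -- Combine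
  calc ‖E‖ = ‖∑ ℓ ∈ Finset.range p, (U ℓ + L ℓ)‖ := by rw [← hdecomp]
    _ ≤ ∑ ℓ ∈ Finset.range p, ‖U ℓ + L ℓ‖ := norm_sum_le _ _
    _ ≤ ∑ ℓ ∈ Finset.range p, (ε * ‖A‖ + ε * ‖A‖) := by
        apply Finset.sum_le_sum
        intro ℓ hℓ
        rw [Finset.mem_range] at hℓ
        exact le_trans (norm_add_le _ _) (add_le_add (hUb ℓ hℓ) (hLb ℓ hℓ))
    _ = 2 * p * ε * ‖A‖ := by
        rw [Finset.sum_const, Finset.card_range, nsmul_eq_mul]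
        ring
end
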